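/- Let A be a finite dimensional k-algebra with universal coacting bialgebra (a(A), η_A). For any bialgebra H and any algebra homomorphism f : A → A ⊗ H making A into a right H-comodule, there exists a unique bialgebra homomorphism θ : a(A) → H such that f = (Id_A ⊗ θ) ∘ η_A. In other words, (a(A), η_A) is the initial object in the category of bialgebras coacting on A. -/

import Mathlib

open TensorProduct

noncomputable section

variable (k : Type) [Field k]

/-- The relations defining the quantum symmetry semigroup `a(A)` of a finite dimensional
algebra `A` with basis `e` (with `e 0 = 1`), in terms of the structure constants
`τ i j s = e.repr (e i * e j) s`. -/
inductive ARel {A : Type} [Ring A] [Algebra k A] {n : ℕ} [NeZero n]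
    (e : Module.Basis (Fin n) k A) :
    FreeAlgebra k (Fin n × Fin n) → FreeAlgebra k (Fin n × Fin n) → Prop
  | mul (a i j : Fin n) :
      ARel e (∑ u, e.repr (e i * e j) u • FreeAlgebra.ι k (a, u))
        (∑ s, ∑ t, e.repr (e s * e t) a • (FreeAlgebra.ι k (s, i) * FreeAlgebra.ι k (t, j)))
  | unit (a : Fin n) :
      ARel e (FreeAlgebra.ι k (a, (0 : Fin n))) (if a = 0 then 1 else 0)

/-- The quantum symmetry semigroup `a(A)`. -/
abbrev aA {A : Type} [Ring A] [Algebra k A] {n : ℕ} [NeZero n] (e : Module.Basis (Fin n) k A) :=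
  RingQuot (ARel k e)

/-- The generators `x_{s i}` of `a(A)`. -/
def xg {A : Type} [Ring A] [Algebra k A] {n : ℕ} [NeZero n] (e : Module.Basis (Fin n) k A)
    (s i : Fin n) : aA k e :=
  RingQuot.mkAlgHom k (ARel k e) (FreeAlgebra.ι k (s, i))

/-- The canonical map `η_A : A → A ⊗ a(A)`, `e i ↦ ∑ s, e s ⊗ x_{s i}`, as a linear map. -/
def etaA {A : Type} [Ring A] [Algebra k A] {n : ℕ} [NeZero n] (e : Module.Basis (Fin n) k A) :
    A →ₗ[k] A ⊗[k] aA k e :=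
  (e.constr k) fun i => ∑ s, e s ⊗ₜ[k] xg k e s i


set_option synthInstance.maxHeartbeats 1000000
set_option maxHeartbeats 1000000

section Aux
variable {A : Type} [Ring A] [Algebra k A] {n : ℕ} [NeZero n] (e : Module.Basis (Fin n) k A)
variable (M : Type) [AddCommGroup M] [Module k M]

/-- Coefficient extraction from `A ⊗ M` along the basis `e`. -/
def coeffM (a : Fin n) : A ⊗[k] M →ₗ[k] M :=
  (TensorProduct.lid k M).toLinearMap ∘ₗ TensorProduct.map (e.coord a) LinearMap.id

lemma coeffM_tmul (a : Fin n) (x : A) (m : M) :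
    coeffM k e M a (x ⊗ₜ[k] m) = e.repr x a • m := by
  simp [coeffM, Module.Basis.coord_apply]

lemma coeffM_basis_sum (a : Fin n) (h : Fin n → M) :
    coeffM k e M a (∑ s, e s ⊗ₜ[k] h s) = h a := by
  rw [map_sum]
  simp [coeffM_tmul, Module.Basis.repr_self, Finsupp.single_apply]

lemma coeff_inj (h g : Fin n → M) (H : (∑ s, e s ⊗ₜ[k] h s) = ∑ s, e s ⊗ₜ[k] g s) (a : Fin n) :
    h a = g a := by
  rw [← coeffM_basis_sum k e M a h, H, coeffM_basis_sum]

lemma expandM (x : A ⊗[k] M) : x = ∑ s, e s ⊗ₜ[k] coeffM k e M s x := by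
  induction x with
  | zero => simp
  | tmul a m =>
      simp only [coeffM_tmul]
      calc a ⊗ₜ[k] m = (∑ s, e.repr a s • e s) ⊗ₜ[k] m := by rw [Module.Basis.sum_repr]
        _ = ∑ s, e s ⊗ₜ[k] (e.repr a s • m) := by
            rw [sum_tmul]; exact Finset.sum_congr rfl fun s _ => by rw [smul_tmul, tmul_smul]
  | add x y hx hy =>
      simp only [map_add, tmul_add, Finset.sum_add_distrib]
      rw [← hx, ← hy]

lemma aA_algHom_ext {B : Type*} [Semiring B] [Algebra k B] {g1 g2 : aA k e →ₐ[k] B}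
    (h : ∀ s i, g1 (xg k e s i) = g2 (xg k e s i)) : g1 = g2 := by
  have h2 : g1.comp (RingQuot.mkAlgHom k (ARel k e)) = g2.comp (RingQuot.mkAlgHom k (ARel k e)) :=
    FreeAlgebra.hom_ext (funext fun p => h p.1 p.2)
  refine AlgHom.ext fun z => ?_
  obtain ⟨w, rfl⟩ := RingQuot.mkAlgHom_surjective k (ARel k e) z
  exact AlgHom.congr_fun h2 w

lemma sum3_comm {β : Type*} [AddCommMonoid β] (g : Fin n → Fin n → Fin n → β) :
    ∑ s, ∑ t, ∑ b, g s t b = ∑ b, ∑ s, ∑ t, g s t b :=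
  (Finset.sum_congr rfl fun _ _ => Finset.sum_comm).trans Finset.sum_comm

end Aux

/-- `(a(A), η_A)` is the initial object of the category of bialgebras
coacting on `A`: for any bialgebra `H` and any algebra map `f : A → A ⊗ H` making `A` a
right `H`-comodule, there is a unique bialgebra homomorphism `θ : a(A) → H` with
`f = (Id_A ⊗ θ) ∘ η_A`. -/
theorem aA_initial_coacting_bialgebra {A : Type} [Ring A] [Algebra k A] {n : ℕ} [NeZero n]
    (e : Module.Basis (Fin n) k A) (he : e 0 = 1)
    -- the universal coacting bialgebra structure on `a(A)`
    (Δ : aA k e →ₐ[k] aA k e ⊗[k] aA k e) (ε : aA k e →ₐ[k] k)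
    (hΔ : ∀ i j, Δ (xg k e i j) = ∑ s, xg k e i s ⊗ₜ[k] xg k e s j)
    (hε : ∀ i j, ε (xg k e i j) = if i = j then 1 else 0)
    -- a bialgebra `H` coacting on `A`
    (H : Type) [Ring H] [Bialgebra k H] (f : A →ₐ[k] A ⊗[k] H)
    (hf1 : ∀ x : A, TensorProduct.map LinearMap.id (Coalgebra.comul (R := k)) (f x) =
      (TensorProduct.assoc k A H H) (TensorProduct.map f.toLinearMap LinearMap.id (f x)))
    (hf2 : ∀ x : A,
      TensorProduct.map LinearMap.id (Coalgebra.counit (R := k)) (f x) = x ⊗ₜ[k] (1 : k)) :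
    ∃! θ : aA k e →ₐ[k] H,
      -- `θ` is a coalgebra (hence bialgebra) homomorphism
      (∀ z, TensorProduct.map θ.toLinearMap θ.toLinearMap (Δ z) = Coalgebra.comul (θ z)) ∧
      (∀ z, Coalgebra.counit (R := k) (θ z) = ε z) ∧
      -- the diagram commutes
      (∀ x : A, f x = Algebra.TensorProduct.map (AlgHom.id k A) θ (etaA k e x)) := by
  classical
  -- the matrix coefficients of the coaction
  set c : Fin n → Fin n → H := fun s i => coeffM k e H s (f (e i)) with hc
  have hfe : ∀ i, f (e i) = ∑ s, e s ⊗ₜ[k] c s i := fun i => expandM k e H (f (e i))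
  -- the coefficients satisfy the defining relations of a(A)
  have h1 : f (e 0) = e 0 ⊗ₜ[k] (1 : H) := by
    rw [he, map_one, Algebra.TensorProduct.one_def]
  have hc_unit : ∀ a, c a 0 = if a = 0 then 1 else 0 := by
    intro a
    show coeffM k e H a (f (e 0)) = _
    rw [h1, coeffM_tmul, Module.Basis.repr_self, Finsupp.single_apply]
    rcases eq_or_ne a 0 with rfl | h
    · simp
    · simp [h, Ne.symm h]
  have hc_mul : ∀ a i j, (∑ u, e.repr (e i * e j) u • c a u)
      = ∑ s, ∑ t, e.repr (e s * e t) a • (c s i * c t j) := by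
    intro a i j
    have key : f (e i * e j) = f (e i) * f (e j) := map_mul f _ _
    have lhs : f (e i * e j) = ∑ b, e b ⊗ₜ[k] (∑ u, e.repr (e i * e j) u • c b u) := by
      conv_lhs => rw [show e i * e j = ∑ u, e.repr (e i * e j) u • e u from (e.sum_repr _).symm]
      rw [map_sum]
      simp only [map_smul, hfe, Finset.smul_sum]
      rw [Finset.sum_comm]
      simp only [tmul_sum, smul_tmul, tmul_smul]
    have rhs : f (e i) * f (e j)
        = ∑ b, e b ⊗ₜ[k] (∑ s, ∑ t, e.repr (e s * e t) b • (c s i * c t j)) := by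
      rw [hfe i, hfe j, Finset.sum_mul_sum]
      simp only [Algebra.TensorProduct.tmul_mul_tmul]
      have hst : ∀ s t : Fin n, (e s * e t) ⊗ₜ[k] (c s i * c t j)
          = ∑ b, e b ⊗ₜ[k] (e.repr (e s * e t) b • (c s i * c t j)) := by
        intro s t
        conv_lhs => rw [show e s * e t = ∑ b, e.repr (e s * e t) b • e b from (e.sum_repr _).symm]
        rw [sum_tmul]
        exact Finset.sum_congr rfl fun b _ => by rw [smul_tmul, tmul_smul]
      simp only [hst, tmul_sum]
      exact sum3_comm _
    exact coeff_inj k e H _ _ (lhs ▸ rhs ▸ key) a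
  -- construct θ
  have hrel : ∀ ⦃x y⦄, ARel k e x y →
      (FreeAlgebra.lift k (fun p : Fin n × Fin n => c p.1 p.2)) x
      = (FreeAlgebra.lift k (fun p : Fin n × Fin n => c p.1 p.2)) y := by
    intro x y hxy
    induction hxy with
    | mul a i j =>
        simp only [map_sum, map_smul, map_mul, FreeAlgebra.lift_ι_apply]
        exact hc_mul a i j
    | unit a =>
        simp only [FreeAlgebra.lift_ι_apply]
        rcases eq_or_ne a 0 with rfl | h
        · simpa using hc_unit 0
        · simpa [h] using hc_unit a
  set θ : aA k e →ₐ[k] H :=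
    RingQuot.liftAlgHom k ⟨FreeAlgebra.lift k (fun p : Fin n × Fin n => c p.1 p.2), hrel⟩ with hθ
  have hθx : ∀ s i, θ (xg k e s i) = c s i := by
    intro s i
    rw [hθ, xg, RingQuot.liftAlgHom_mkAlgHom_apply, FreeAlgebra.lift_ι_apply]
  -- comultiplication on the coefficients
  have hcomul : ∀ s j, (Coalgebra.comul (R := k)) (c s j) = ∑ t, c s t ⊗ₜ[k] c t j := by
    intro s j
    have h := hf1 (e j)
    have lhs : TensorProduct.map LinearMap.id (Coalgebra.comul (R := k)) (f (e j))
        = ∑ u, e u ⊗ₜ[k] (Coalgebra.comul (R := k) (c u j)) := by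
      rw [hfe j, map_sum]
      simp only [TensorProduct.map_tmul, LinearMap.id_apply]
    have rhs : (TensorProduct.assoc k A H H)
        (TensorProduct.map f.toLinearMap LinearMap.id (f (e j)))
        = ∑ u, e u ⊗ₜ[k] (∑ t, c u t ⊗ₜ[k] c t j) := by
      rw [hfe j, map_sum, map_sum]
      simp only [TensorProduct.map_tmul, LinearMap.id_apply, AlgHom.toLinearMap_apply]
      simp only [hfe, sum_tmul, map_sum, TensorProduct.assoc_tmul]
      rw [Finset.sum_comm]
      simp only [tmul_sum]
    rw [lhs, rhs] at h
    exact coeff_inj k e (H ⊗[k] H) _ _ h s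
  have hcounit : ∀ s j, (Coalgebra.counit (R := k)) (c s j) = if s = j then (1 : k) else 0 := by
    intro s j
    have h := hf2 (e j)
    have lhs : TensorProduct.map LinearMap.id (Coalgebra.counit (R := k)) (f (e j))
        = ∑ u, e u ⊗ₜ[k] (Coalgebra.counit (R := k) (c u j)) := by
      rw [hfe j, map_sum]
      simp only [TensorProduct.map_tmul, LinearMap.id_apply]
    have rhs : (e j) ⊗ₜ[k] (1 : k) = ∑ u, e u ⊗ₜ[k] (if u = j then (1 : k) else 0) := by
      rw [Finset.sum_congr rfl fun u (_ : u ∈ Finset.univ) =>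
        show e u ⊗ₜ[k] (if u = j then (1:k) else 0)
          = if u = j then e u ⊗ₜ[k] (1:k) else 0 from by split_ifs <;> simp]
      rw [Finset.sum_ite_eq' Finset.univ j (fun u => e u ⊗ₜ[k] (1:k))]
      simp
    rw [lhs, rhs] at h
    exact coeff_inj k e k _ _ h s
  -- the three conditions
  have hmapLin : TensorProduct.map θ.toLinearMap θ.toLinearMap
      = (Algebra.TensorProduct.map θ θ).toLinearMap := by
    apply TensorProduct.ext'
    intro x y
    simp [Algebra.TensorProduct.map_tmul]
  have key1 : (Bialgebra.comulAlgHom k H).comp θ = (Algebra.TensorProduct.map θ θ).comp Δ := by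
    apply aA_algHom_ext k e
    intro i j
    simp only [AlgHom.comp_apply, hΔ, map_sum, Algebra.TensorProduct.map_tmul, hθx,
      Bialgebra.comulAlgHom_apply]
    exact hcomul i j
  have key2 : (Bialgebra.counitAlgHom k H).comp θ = ε := by
    apply aA_algHom_ext k e
    intro i j
    simp only [AlgHom.comp_apply, hθx, Bialgebra.counitAlgHom_apply, hε]
    exact hcounit i j
  have key3 : f.toLinearMap = (Algebra.TensorProduct.map (AlgHom.id k A) θ).toLinearMap ∘ₗ
      etaA k e := by
    apply Module.Basis.ext e
    intro i
    simp only [AlgHom.toLinearMap_apply, LinearMap.coe_comp, Function.comp_apply,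
      etaA, Module.Basis.constr_basis, map_sum, Algebra.TensorProduct.map_tmul, AlgHom.coe_id,
      id_eq, hθx]
    exact hfe i
  refine ⟨θ, ⟨?_, ?_, ?_⟩, ?_⟩
  · intro z
    rw [hmapLin]
    exact (AlgHom.congr_fun key1 z).symm
  · intro z
    exact AlgHom.congr_fun key2 z
  · intro x
    exact LinearMap.congr_fun key3 x
  · rintro θ' ⟨-, -, h3⟩
    apply aA_algHom_ext k e
    intro s i
    have hθ'x : f (e i) = ∑ u, e u ⊗ₜ[k] θ' (xg k e u i) := by
      rw [h3 (e i)]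
      simp only [etaA, Module.Basis.constr_basis, map_sum, Algebra.TensorProduct.map_tmul,
        AlgHom.coe_id, id_eq]
    have := coeff_inj k e H _ _ ((hfe i).symm.trans hθ'x) s
    rw [hθx s i, ← this]


end
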